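/- Let V be a U(sp(2n,C))-module and v ∈ V a vector satisfying (0 0; X 0)·v = 0 for all symmetric X (holomorphicity) and H_X v = k Tr(X) v for all X ∈ gl(n,C) (weight k). Let Δ⁽¹⁾ = Σᵢ dᵢ² − Σ_α c_α[X_α,Y_α] and Δ = Δ⁽¹⁾ + 2Σ_α c_α X_α Y_α be as above. Then Δ v = kn(k − n − 1) v, and consequently Δ w = kn(k−n−1) w for every w in the U(sp(2n,C))-submodule generated by v. -/

import Mathlib

open Matrix

attribute [local instance 100] LieRing.ofAssociativeRing

noncomputable section

/-- The standard symplectic form matrix `J = (0 I; -I 0)`. -/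
def Jmat (n : ℕ) : Matrix (Fin n ⊕ Fin n) (Fin n ⊕ Fin n) ℂ :=
  Matrix.fromBlocks 0 1 (-1) 0

/-- The symplectic Lie algebra `sp(2n, ℂ)`, realized as matrices `X` with
`Xᵀ J + J X = 0`, i.e. skew-adjoint matrices with respect to `Jmat n`. -/
def sp (n : ℕ) : LieSubalgebra ℂ (Matrix (Fin n ⊕ Fin n) (Fin n ⊕ Fin n) ℂ) :=
  skewAdjointMatricesLieSubalgebra (Jmat n)

lemma mem_sp {n : ℕ} {A : Matrix (Fin n ⊕ Fin n) (Fin n ⊕ Fin n) ℂ}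
    (h : Aᵀ * Jmat n = Jmat n * (-A)) : A ∈ sp n :=
  (mem_skewAdjointMatricesSubmodule _ _).2 h

/-- Block matrices `(X 0; 0 -Xᵀ)` lie in `sp(2n,ℂ)`. -/
lemma memH {n : ℕ} (X : Matrix (Fin n) (Fin n) ℂ) :
    Matrix.fromBlocks X 0 0 (-Xᵀ) ∈ sp n := by
  apply mem_sp
  simp [Jmat, Matrix.fromBlocks_transpose, Matrix.fromBlocks_multiply, Matrix.fromBlocks_neg]

/-- Block matrices `(0 B; 0 0)` with `B` symmetric lie in `sp(2n,ℂ)`. -/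
lemma memB {n : ℕ} (B : Matrix (Fin n) (Fin n) ℂ) (hB : Bᵀ = B) :
    Matrix.fromBlocks 0 B 0 0 ∈ sp n := by
  apply mem_sp
  simp [Jmat, Matrix.fromBlocks_transpose, Matrix.fromBlocks_multiply, Matrix.fromBlocks_neg, hB]

lemma symm_entry {n : ℕ} (i j : Fin n) :
    (Matrix.single i j (1:ℂ) + Matrix.single j i 1)ᵀ
      = Matrix.single i j 1 + Matrix.single j i 1 := by
  ext a b
  simp [Matrix.single, Matrix.transpose_apply, and_comm]
  ring

/-- The element `X_{ij} = e_{i,n+j} + e_{j,n+i}` of `sp(2n,ℂ)`. -/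
def Xij {n : ℕ} (i j : Fin n) : sp n :=
  ⟨Matrix.fromBlocks 0 (Matrix.single i j 1 + Matrix.single j i 1) 0 0,
    memB _ (symm_entry i j)⟩

/-- The canonical embedding of `sp(2n,ℂ)` into its universal enveloping algebra. -/
def ι {n : ℕ} : sp n →ₗ⁅ℂ⁆ UniversalEnvelopingAlgebra ℂ (sp n) :=
  UniversalEnvelopingAlgebra.ι ℂ

/-- The determinant raising element `M̂₊ = det(X_{ij}) ∈ U(sp(2n,ℂ))`, defined as the
usual alternating sum over permutations (all entries `X_{ij}` commute). -/
def Mplus (n : ℕ) : UniversalEnvelopingAlgebra ℂ (sp n) :=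
  ∑ σ : Equiv.Perm (Fin n),
    ((Equiv.Perm.sign σ : ℤ) : ℂ) • ((List.ofFn fun i : Fin n => ι (Xij (σ i) i)).prod)

/-- The element `H_X = (X 0; 0 -Xᵀ)` of `sp(2n,ℂ)`, for `X ∈ gl(n,ℂ)`. -/
def Hgl {n : ℕ} (X : Matrix (Fin n) (Fin n) ℂ) : sp n :=
  ⟨Matrix.fromBlocks X 0 0 (-Xᵀ), memH X⟩

/-- Block matrices `(0 0; C 0)` with `C` symmetric lie in `sp(2n,ℂ)`. -/
lemma memC {n : ℕ} (C : Matrix (Fin n) (Fin n) ℂ) (hC : Cᵀ = C) :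
    Matrix.fromBlocks 0 0 C 0 ∈ sp n := by
  apply mem_sp
  simp [Jmat, Matrix.fromBlocks_transpose, Matrix.fromBlocks_multiply,
    Matrix.fromBlocks_neg, hC]

/-- The element `Y_{ij} = e_{n+i,j} + e_{n+j,i}` of `sp(2n,ℂ)`, transpose of `X_{ij}`. -/
def Yij {n : ℕ} (i j : Fin n) : sp n :=
  ⟨Matrix.fromBlocks 0 0 (Matrix.single i j 1 + Matrix.single j i 1) 0,
    memC _ (symm_entry i j)⟩

/-- The Cartan basis element `d_i = e_{i,i} − e_{n+i,n+i}`. -/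
def dElt {n : ℕ} (i : Fin n) : sp n := Hgl (Matrix.single i i 1)

/-- For the short root `d_i* − d_j*` (`i < j`): `X_α = e_{i,j} − e_{n+j,n+i}`. -/
def XA {n : ℕ} (i j : Fin n) : sp n := Hgl (Matrix.single i j 1)

/-- `Y_α = X_αᵀ = e_{j,i} − e_{n+i,n+j}` for the short root `d_i* − d_j*`. -/
def YA {n : ℕ} (i j : Fin n) : sp n := Hgl (Matrix.single j i 1)

/-- For the long root `2d_i*`: `X_α = e_{i,n+i}`. -/
def XL {n : ℕ} (i : Fin n) : sp n :=
  ⟨Matrix.fromBlocks 0 (Matrix.single i i 1) 0 0,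
    memB _ (by ext a b; simp [Matrix.single, Matrix.transpose_apply, and_comm])⟩

/-- `Y_α = e_{n+i,i}` for the long root `2d_i*`. -/
def YL {n : ℕ} (i : Fin n) : sp n :=
  ⟨Matrix.fromBlocks 0 0 (Matrix.single i i 1) 0,
    memC _ (by ext a b; simp [Matrix.single, Matrix.transpose_apply, and_comm])⟩

/-- The set of pairs `i < j`, indexing the short positive roots. -/
def pairs (n : ℕ) : Finset (Fin n × Fin n) :=
  Finset.univ.filter fun p => p.1 < p.2

/-- `Δ⁽¹⁾ = Σᵢ dᵢ² − Σ_α c_α [X_α, Y_α]`, with `c_α = 1` for short and `2` for long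
roots, in `U(sp(2n,ℂ))`. -/
def Delta1 (n : ℕ) : UniversalEnvelopingAlgebra ℂ (sp n) :=
  (∑ i : Fin n, ι (dElt i) * ι (dElt i))
    - ((∑ p ∈ pairs n,
          ((ι (XA p.1 p.2) * ι (YA p.1 p.2) - ι (YA p.1 p.2) * ι (XA p.1 p.2))
            + (ι (Xij p.1 p.2) * ι (Yij p.1 p.2) - ι (Yij p.1 p.2) * ι (Xij p.1 p.2))))
        + 2 * ∑ i : Fin n,
          (ι (XL i) * ι (YL i) - ι (YL i) * ι (XL i)))

/-- `Δ = Δ⁽¹⁾ + 2 Σ_α c_α X_α Y_α`, the Laplace–Beltrami element. -/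
def Delta (n : ℕ) : UniversalEnvelopingAlgebra ℂ (sp n) :=
  Delta1 n
    + 2 * ((∑ p ∈ pairs n,
        (ι (XA p.1 p.2) * ι (YA p.1 p.2) + ι (Xij p.1 p.2) * ι (Yij p.1 p.2)))
      + 2 * ∑ i : Fin n, ι (XL i) * ι (YL i))

set_option synthInstance.maxHeartbeats 1000000
set_option maxHeartbeats 1000000


section Aux

variable {n : ℕ}

lemma Jmat_mul_Jmat (n : ℕ) : Jmat n * Jmat n = -1 := by
  simp [Jmat, Matrix.fromBlocks_multiply, ← Matrix.fromBlocks_one, Matrix.fromBlocks_neg]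

lemma Jmat_transpose (n : ℕ) : (Jmat n)ᵀ = -(Jmat n) := by
  simp [Jmat, Matrix.fromBlocks_transpose, Matrix.fromBlocks_neg]

/-- Orthogonal projection of `gl(2n)` onto `sp(2n)` w.r.t. the trace form. -/
def Pm (n : ℕ) (A : Matrix (Fin n ⊕ Fin n) (Fin n ⊕ Fin n) ℂ) :
    Matrix (Fin n ⊕ Fin n) (Fin n ⊕ Fin n) ℂ :=
  (2⁻¹ : ℂ) • (A + Jmat n * Aᵀ * Jmat n)

lemma Jmat_mul_Jmat_mul (n : ℕ) (X : Matrix (Fin n ⊕ Fin n) (Fin n ⊕ Fin n) ℂ) :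
    Jmat n * (Jmat n * X) = -X := by
  rw [← Matrix.mul_assoc, Jmat_mul_Jmat, Matrix.neg_mul, Matrix.one_mul]

lemma Pm_mem (n : ℕ) (A : Matrix (Fin n ⊕ Fin n) (Fin n ⊕ Fin n) ℂ) : Pm n A ∈ sp n := by
  apply mem_sp
  have hJJ := Jmat_mul_Jmat n
  have hJT := Jmat_transpose n
  have h2 := Jmat_mul_Jmat_mul n
  simp only [Pm, Matrix.transpose_smul, Matrix.smul_mul, Matrix.mul_smul]
  simp only [Matrix.transpose_add, Matrix.transpose_mul, Matrix.transpose_transpose, hJT,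
    Matrix.neg_mul, Matrix.mul_neg, Matrix.add_mul, Matrix.mul_add, neg_neg, Matrix.mul_assoc,
    hJJ, h2, Matrix.mul_one]
  rw [Matrix.mul_smul, Matrix.mul_add, h2]
  module

/-- `Pm` as a linear map. -/
def PmL (n : ℕ) : Matrix (Fin n ⊕ Fin n) (Fin n ⊕ Fin n) ℂ →ₗ[ℂ]
    Matrix (Fin n ⊕ Fin n) (Fin n ⊕ Fin n) ℂ where
  toFun := Pm n
  map_add' A B := by
    simp only [Pm, Matrix.transpose_add, Matrix.mul_add, Matrix.add_mul, smul_add]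
    module
  map_smul' c A := by
    simp only [Pm, Matrix.transpose_smul, Matrix.mul_smul, Matrix.smul_mul, smul_add,
      RingHom.id_apply]
    module

lemma sp_rel (z : sp n) : (z : Matrix (Fin n ⊕ Fin n) (Fin n ⊕ Fin n) ℂ)ᵀ * Jmat n
    = Jmat n * (-(z : Matrix (Fin n ⊕ Fin n) (Fin n ⊕ Fin n) ℂ)) :=
  (mem_skewAdjointMatricesSubmodule _ _).1 z.2

lemma Pm_of_sp (z : sp n) : Pm n (z : Matrix (Fin n ⊕ Fin n) (Fin n ⊕ Fin n) ℂ) = z := by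
  have h : Jmat n * ((z : Matrix (Fin n ⊕ Fin n) (Fin n ⊕ Fin n) ℂ)ᵀ * Jmat n)
      = (z : Matrix (Fin n ⊕ Fin n) (Fin n ⊕ Fin n) ℂ) := by
    rw [sp_rel z, Jmat_mul_Jmat_mul, neg_neg]
  rw [Pm, Matrix.mul_assoc, h, ← two_smul ℂ, smul_smul]
  norm_num

/-- The "dual pair family" `Fe a b = Pm (E a b)` indexed by pairs of indices. -/
def Fe (a b : Fin n ⊕ Fin n) : sp n := ⟨Pm n (Matrix.single a b 1), Pm_mem n _⟩

lemma trace_mul_stdBasis {m : Type*} [Fintype m] [DecidableEq m]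
    (z : Matrix m m ℂ) (a b : m) :
    (z * Matrix.single b a 1).trace = z a b := by
  simp only [Matrix.trace, Matrix.diag, Matrix.mul_apply, Matrix.single, Matrix.of_apply,
    mul_ite, mul_one, mul_zero, ite_and]
  simp [Finset.sum_ite_eq, Finset.sum_ite_eq']

/-- The key reproducing property of the family `Fe`. -/
lemma trace_mul_Fe (z : sp n) (a b : Fin n ⊕ Fin n) :
    ((z : Matrix (Fin n ⊕ Fin n) (Fin n ⊕ Fin n) ℂ) * (Fe b a : Matrix (Fin n ⊕ Fin n) (Fin n ⊕ Fin n) ℂ)).trace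
      = (z : Matrix (Fin n ⊕ Fin n) (Fin n ⊕ Fin n) ℂ) a b := by
  set Z := (z : Matrix (Fin n ⊕ Fin n) (Fin n ⊕ Fin n) ℂ)
  have h1 : (Z * (Jmat n * (Matrix.single b a (1:ℂ))ᵀ * Jmat n)).trace
      = (Z * Matrix.single b a 1).trace := by
    have hz : Jmat n * Z = -(Zᵀ * Jmat n) := by rw [sp_rel z]; simp [Z]
    rw [show Z * (Jmat n * (Matrix.single b a (1:ℂ))ᵀ * Jmat n)
        = (Z * Jmat n * (Matrix.single b a (1:ℂ))ᵀ) * Jmat n by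
      simp only [Matrix.mul_assoc]]
    rw [Matrix.trace_mul_comm]
    rw [show Jmat n * (Z * Jmat n * (Matrix.single b a (1:ℂ))ᵀ)
        = ((Jmat n * Z) * Jmat n) * (Matrix.single b a (1:ℂ))ᵀ from by
      simp only [Matrix.mul_assoc]]
    rw [hz]
    simp only [Matrix.neg_mul, Matrix.trace_neg, Matrix.mul_assoc, Jmat_mul_Jmat_mul,
      Matrix.mul_neg, neg_neg, ← Matrix.transpose_mul, Matrix.trace_transpose]
    rw [Matrix.trace_mul_comm]
  show (Z * ((2⁻¹ : ℂ) • (Matrix.single b a 1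
      + Jmat n * (Matrix.single b a (1:ℂ))ᵀ * Jmat n))).trace = Z a b
  rw [Matrix.mul_smul, Matrix.trace_smul, Matrix.mul_add, Matrix.trace_add, h1,
    trace_mul_stdBasis]
  rw [smul_eq_mul]
  ring

/-- Reproducing expansion of any element of `sp n` in terms of the family `Fe`. -/
lemma repro (z : sp n) :
    (∑ q : (Fin n ⊕ Fin n) × (Fin n ⊕ Fin n),
      ((z : Matrix (Fin n ⊕ Fin n) (Fin n ⊕ Fin n) ℂ)
        * (Fe q.2 q.1 : Matrix (Fin n ⊕ Fin n) (Fin n ⊕ Fin n) ℂ)).trace • Fe q.1 q.2) = z := by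
  apply Subtype.ext
  rw [show ((∑ q : (Fin n ⊕ Fin n) × (Fin n ⊕ Fin n),
      ((z : Matrix (Fin n ⊕ Fin n) (Fin n ⊕ Fin n) ℂ)
        * (Fe q.2 q.1 : Matrix (Fin n ⊕ Fin n) (Fin n ⊕ Fin n) ℂ)).trace • Fe q.1 q.2 : sp n)
      : Matrix (Fin n ⊕ Fin n) (Fin n ⊕ Fin n) ℂ)
      = ∑ q : (Fin n ⊕ Fin n) × (Fin n ⊕ Fin n),
        ((z : Matrix (Fin n ⊕ Fin n) (Fin n ⊕ Fin n) ℂ)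
          * (Fe q.2 q.1 : Matrix (Fin n ⊕ Fin n) (Fin n ⊕ Fin n) ℂ)).trace
            • (Fe q.1 q.2 : Matrix (Fin n ⊕ Fin n) (Fin n ⊕ Fin n) ℂ) from
    map_sum ((sp n).toSubmodule.subtype) _ Finset.univ]
  rw [Fintype.sum_prod_type]
  simp only [trace_mul_Fe]
  have : ∀ a b : Fin n ⊕ Fin n,
      (z : Matrix (Fin n ⊕ Fin n) (Fin n ⊕ Fin n) ℂ) a b • (Fe a b : Matrix (Fin n ⊕ Fin n) (Fin n ⊕ Fin n) ℂ)
        = PmL n (Matrix.single a b ((z : Matrix (Fin n ⊕ Fin n) (Fin n ⊕ Fin n) ℂ) a b)) := by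
    intro a b
    show _ = Pm n _
    rw [show Matrix.single a b ((z : Matrix (Fin n ⊕ Fin n) (Fin n ⊕ Fin n) ℂ) a b)
        = (z : Matrix (Fin n ⊕ Fin n) (Fin n ⊕ Fin n) ℂ) a b • Matrix.single a b 1 by
      simp]
    exact (PmL n).map_smul _ _ |>.symm
  simp only [this, ← map_sum]
  rw [← Matrix.matrix_eq_sum_single]
  exact Pm_of_sp z

lemma tr_inv {m : Type*} [Fintype m] (x u w : Matrix m m ℂ) :
    ((x * u - u * x) * w).trace = -(((x * w - w * x) * u).trace) := by
  simp only [Matrix.sub_mul, Matrix.trace_sub]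
  rw [Matrix.trace_mul_cycle x u w, Matrix.trace_mul_cycle u x w, Matrix.trace_mul_cycle w u x]
  ring

/-- The Casimir element of `sp(2n,ℂ)` (w.r.t. the trace form). -/
def Cas (n : ℕ) : UniversalEnvelopingAlgebra ℂ (sp n) :=
  ∑ q : (Fin n ⊕ Fin n) × (Fin n ⊕ Fin n), ι (Fe q.1 q.2) * ι (Fe q.2 q.1)

lemma iota_expand (z : sp n) :
    ι z = ∑ q : (Fin n ⊕ Fin n) × (Fin n ⊕ Fin n),
      ((z : Matrix (Fin n ⊕ Fin n) (Fin n ⊕ Fin n) ℂ)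
        * (Fe q.2 q.1 : Matrix (Fin n ⊕ Fin n) (Fin n ⊕ Fin n) ℂ)).trace • ι (Fe q.1 q.2) := by
  conv_lhs => rw [← repro z]
  show (ι : sp n →ₗ⁅ℂ⁆ UniversalEnvelopingAlgebra ℂ (sp n)).toLinearMap _ = _
  rw [map_sum]
  simp only [LinearMap.map_smul, LieHom.coe_toLinearMap]

lemma cas_comm (x : sp n) : ι x * Cas n = Cas n * ι x := by
  rw [← sub_eq_zero, Cas, Finset.mul_sum, Finset.sum_mul, ← Finset.sum_sub_distrib]
  have step : ∀ p : (Fin n ⊕ Fin n) × (Fin n ⊕ Fin n),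
      ι x * (ι (Fe p.1 p.2) * ι (Fe p.2 p.1)) - ι (Fe p.1 p.2) * ι (Fe p.2 p.1) * ι x
      = ι ⁅x, Fe p.1 p.2⁆ * ι (Fe p.2 p.1) + ι (Fe p.1 p.2) * ι ⁅x, Fe p.2 p.1⁆ := by
    intro p
    rw [LieHom.map_lie, LieHom.map_lie, Ring.lie_def, Ring.lie_def]
    noncomm_ring
  simp only [step]
  have expand1 : ∀ p : (Fin n ⊕ Fin n) × (Fin n ⊕ Fin n),
      ι ⁅x, Fe p.1 p.2⁆ * ι (Fe p.2 p.1)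
      = ∑ q : (Fin n ⊕ Fin n) × (Fin n ⊕ Fin n),
          (((⁅x, Fe p.1 p.2⁆ : sp n) : Matrix (Fin n ⊕ Fin n) (Fin n ⊕ Fin n) ℂ)
            * (Fe q.2 q.1 : Matrix (Fin n ⊕ Fin n) (Fin n ⊕ Fin n) ℂ)).trace
            • (ι (Fe q.1 q.2) * ι (Fe p.2 p.1)) := by
    intro p
    rw [iota_expand ⁅x, Fe p.1 p.2⁆, Finset.sum_mul]
    simp only [smul_mul_assoc]
  have expand2 : ∀ p : (Fin n ⊕ Fin n) × (Fin n ⊕ Fin n),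
      ι (Fe p.1 p.2) * ι ⁅x, Fe p.2 p.1⁆
      = ∑ q : (Fin n ⊕ Fin n) × (Fin n ⊕ Fin n),
          (((⁅x, Fe p.2 p.1⁆ : sp n) : Matrix (Fin n ⊕ Fin n) (Fin n ⊕ Fin n) ℂ)
            * (Fe q.2 q.1 : Matrix (Fin n ⊕ Fin n) (Fin n ⊕ Fin n) ℂ)).trace
            • (ι (Fe p.1 p.2) * ι (Fe q.1 q.2)) := by
    intro p
    rw [iota_expand ⁅x, Fe p.2 p.1⁆, Finset.mul_sum]
    simp only [mul_smul_comm]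
  simp only [expand1, expand2]
  -- flatten the double sums
  have hflat : ∀ (F : ((Fin n ⊕ Fin n) × (Fin n ⊕ Fin n)) → ((Fin n ⊕ Fin n) × (Fin n ⊕ Fin n))
      → UniversalEnvelopingAlgebra ℂ (sp n)),
      (∑ p : (Fin n ⊕ Fin n) × (Fin n ⊕ Fin n), ∑ q : (Fin n ⊕ Fin n) × (Fin n ⊕ Fin n), F p q)
      = ∑ r : ((Fin n ⊕ Fin n) × (Fin n ⊕ Fin n)) × ((Fin n ⊕ Fin n) × (Fin n ⊕ Fin n)),
          F r.1 r.2 := fun F => (Fintype.sum_prod_type (f := fun r => F r.1 r.2)).symm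
  simp only [Finset.sum_add_distrib]
  rw [hflat, hflat]
  set A : ((Fin n ⊕ Fin n) × (Fin n ⊕ Fin n)) × ((Fin n ⊕ Fin n) × (Fin n ⊕ Fin n))
      → UniversalEnvelopingAlgebra ℂ (sp n) := fun r =>
    (((⁅x, Fe r.1.1 r.1.2⁆ : sp n) : Matrix (Fin n ⊕ Fin n) (Fin n ⊕ Fin n) ℂ)
      * (Fe r.2.2 r.2.1 : Matrix (Fin n ⊕ Fin n) (Fin n ⊕ Fin n) ℂ)).trace
      • (ι (Fe r.2.1 r.2.2) * ι (Fe r.1.2 r.1.1)) with hA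
  set B : ((Fin n ⊕ Fin n) × (Fin n ⊕ Fin n)) × ((Fin n ⊕ Fin n) × (Fin n ⊕ Fin n))
      → UniversalEnvelopingAlgebra ℂ (sp n) := fun r =>
    (((⁅x, Fe r.1.2 r.1.1⁆ : sp n) : Matrix (Fin n ⊕ Fin n) (Fin n ⊕ Fin n) ℂ)
      * (Fe r.2.2 r.2.1 : Matrix (Fin n ⊕ Fin n) (Fin n ⊕ Fin n) ℂ)).trace
      • (ι (Fe r.1.1 r.1.2) * ι (Fe r.2.1 r.2.2)) with hB
  have key : ∑ r, B r = ∑ r, -A r := by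
    apply Fintype.sum_equiv
      (⟨fun r => ((r.2.2, r.2.1), r.1), fun r => (r.2, (r.1.2, r.1.1)), fun r => rfl,
        fun r => rfl⟩ :
        (((Fin n ⊕ Fin n) × (Fin n ⊕ Fin n)) × ((Fin n ⊕ Fin n) × (Fin n ⊕ Fin n)))
        ≃ (((Fin n ⊕ Fin n) × (Fin n ⊕ Fin n)) × ((Fin n ⊕ Fin n) × (Fin n ⊕ Fin n))))
    intro r
    rw [hA, hB]
    dsimp only [Equiv.coe_fn_mk]
    rw [← neg_smul]
    congr 1
    have hc : ∀ (u w : sp n),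
        (((⁅x, u⁆ : sp n) : Matrix (Fin n ⊕ Fin n) (Fin n ⊕ Fin n) ℂ)
          * (w : Matrix (Fin n ⊕ Fin n) (Fin n ⊕ Fin n) ℂ)).trace
        = -((((⁅x, w⁆ : sp n) : Matrix (Fin n ⊕ Fin n) (Fin n ⊕ Fin n) ℂ)
          * (u : Matrix (Fin n ⊕ Fin n) (Fin n ⊕ Fin n) ℂ)).trace) := by
      intro u w
      exact tr_inv (x : Matrix (Fin n ⊕ Fin n) (Fin n ⊕ Fin n) ℂ) u w
    exact hc (Fe r.1.2 r.1.1) (Fe r.2.2 r.2.1)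
  rw [key]
  simp

lemma commute_all (u : UniversalEnvelopingAlgebra ℂ (sp n)) : u * Cas n = Cas n * u := by
  obtain ⟨t, rfl⟩ : ∃ t, UniversalEnvelopingAlgebra.mkAlgHom ℂ (sp n) t = u :=
    RingCon.mkₐ_surjective (α := ℂ) (UniversalEnvelopingAlgebra.ringCon ℂ (sp n)) u
  induction t using TensorAlgebra.induction with
  | algebraMap r =>
    rw [AlgHom.commutes]
    exact Algebra.commutes r (Cas n)
  | ι y =>
    rw [show UniversalEnvelopingAlgebra.mkAlgHom ℂ (sp n)
        (TensorAlgebra.ι ℂ y) = ι y from rfl]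
    exact cas_comm y
  | mul a b ha hb => rw [_root_.map_mul, mul_assoc, hb, ← mul_assoc, ha, mul_assoc]
  | add a b ha hb => rw [_root_.map_add, add_mul, mul_add, ha, hb]

lemma transpose_stdBasis {m k : Type*} [DecidableEq m] [DecidableEq k] (i : m) (j : k) (c : ℂ) :
    (Matrix.single i j c)ᵀ = Matrix.single j i c := by
  ext a b
  simp [Matrix.single, Matrix.transpose_apply, and_comm]

lemma stdBasis_ll (i j : Fin n) :
    Matrix.single (Sum.inl i : Fin n ⊕ Fin n) (Sum.inl j : Fin n ⊕ Fin n) (1:ℂ)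
      = Matrix.fromBlocks (Matrix.single i j 1) 0 0 0 := by
  ext (a|a) (b|b) <;> simp [Matrix.single]

lemma stdBasis_lr (i j : Fin n) :
    Matrix.single (Sum.inl i : Fin n ⊕ Fin n) (Sum.inr j : Fin n ⊕ Fin n) (1:ℂ)
      = Matrix.fromBlocks 0 (Matrix.single i j 1) 0 0 := by
  ext (a|a) (b|b) <;> simp [Matrix.single]

lemma stdBasis_rl (i j : Fin n) :
    Matrix.single (Sum.inr i : Fin n ⊕ Fin n) (Sum.inl j : Fin n ⊕ Fin n) (1:ℂ)
      = Matrix.fromBlocks 0 0 (Matrix.single i j 1) 0 := by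
  ext (a|a) (b|b) <;> simp [Matrix.single]

lemma stdBasis_rr (i j : Fin n) :
    Matrix.single (Sum.inr i : Fin n ⊕ Fin n) (Sum.inr j : Fin n ⊕ Fin n) (1:ℂ)
      = Matrix.fromBlocks 0 0 0 (Matrix.single i j 1) := by
  ext (a|a) (b|b) <;> simp [Matrix.single]

lemma Fe_ll (i j : Fin n) : Fe (Sum.inl i) (Sum.inl j) = (2⁻¹ : ℂ) • Hgl (Matrix.single i j 1) := by
  apply Subtype.ext
  show Pm n _ = (2⁻¹:ℂ) • (Matrix.fromBlocks (Matrix.single i j 1) 0 0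
    (-(Matrix.single i j 1)ᵀ))
  rw [Pm, stdBasis_ll]
  congr 1
  simp [Jmat, Matrix.fromBlocks_transpose, Matrix.fromBlocks_multiply, Matrix.fromBlocks_add,
    transpose_stdBasis]

lemma Fe_lr (i j : Fin n) : Fe (Sum.inl i) (Sum.inr j) = (2⁻¹ : ℂ) • Xij i j := by
  apply Subtype.ext
  show Pm n _ = (2⁻¹:ℂ) • (Matrix.fromBlocks 0
    (Matrix.single i j 1 + Matrix.single j i 1) 0 0)
  rw [Pm, stdBasis_lr]
  congr 1
  simp [Jmat, Matrix.fromBlocks_transpose, Matrix.fromBlocks_multiply, Matrix.fromBlocks_add,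
    transpose_stdBasis]

lemma Fe_rl (i j : Fin n) : Fe (Sum.inr i) (Sum.inl j) = (2⁻¹ : ℂ) • Yij i j := by
  apply Subtype.ext
  show Pm n _ = (2⁻¹:ℂ) • (Matrix.fromBlocks 0 0
    (Matrix.single i j 1 + Matrix.single j i 1) 0)
  rw [Pm, stdBasis_rl]
  congr 1
  simp [Jmat, Matrix.fromBlocks_transpose, Matrix.fromBlocks_multiply, Matrix.fromBlocks_add,
    transpose_stdBasis]

lemma Fe_rr (i j : Fin n) : Fe (Sum.inr i) (Sum.inr j) = (-2⁻¹ : ℂ) • Hgl (Matrix.single j i 1) := by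
  apply Subtype.ext
  show Pm n _ = (-2⁻¹:ℂ) • (Matrix.fromBlocks (Matrix.single j i 1) 0 0
    (-(Matrix.single j i 1)ᵀ))
  rw [Pm, stdBasis_rr]
  simp only [Jmat, Matrix.fromBlocks_transpose, Matrix.fromBlocks_multiply,
    Matrix.fromBlocks_add, Matrix.fromBlocks_smul, Matrix.fromBlocks_neg, transpose_stdBasis,
    Matrix.transpose_zero, Matrix.mul_zero, Matrix.zero_mul, Matrix.mul_one, Matrix.one_mul,
    Matrix.neg_mul, Matrix.mul_neg, add_zero, zero_add, neg_zero, neg_neg, smul_neg, neg_smul]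
  ext (a|a) (b|b) <;> simp [Matrix.smul_apply]

lemma Xij_symm (i j : Fin n) : Xij j i = Xij i j := by
  apply Subtype.ext
  show Matrix.fromBlocks 0 (Matrix.single j i 1 + Matrix.single i j 1) 0 0 = _
  rw [add_comm]
  rfl

lemma Yij_symm (i j : Fin n) : Yij j i = Yij i j := by
  apply Subtype.ext
  show Matrix.fromBlocks 0 0 (Matrix.single j i 1 + Matrix.single i j 1) 0 = _
  rw [add_comm]
  rfl

lemma Xij_diag (i : Fin n) : Xij i i = (2:ℂ) • XL i := by
  apply Subtype.ext
  show Matrix.fromBlocks 0 (Matrix.single i i 1 + Matrix.single i i 1) 0 0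
    = (2:ℂ) • Matrix.fromBlocks 0 (Matrix.single i i 1) 0 0
  rw [two_smul]
  simp [Matrix.fromBlocks_add]

lemma Yij_diag (i : Fin n) : Yij i i = (2:ℂ) • YL i := by
  apply Subtype.ext
  show Matrix.fromBlocks 0 0 (Matrix.single i i 1 + Matrix.single i i 1) 0
    = (2:ℂ) • Matrix.fromBlocks 0 0 (Matrix.single i i 1) 0
  rw [two_smul]
  simp [Matrix.fromBlocks_add]

lemma XA_eq (i j : Fin n) : XA i j = Hgl (Matrix.single i j 1) := rfl
lemma YA_eq (i j : Fin n) : YA i j = Hgl (Matrix.single j i 1) := rfl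
lemma dElt_eq (i : Fin n) : dElt i = Hgl (Matrix.single i i 1) := rfl

lemma Hgl_bracket (X Y : Matrix (Fin n) (Fin n) ℂ) : ⁅Hgl X, Hgl Y⁆ = Hgl (X * Y - Y * X) := by
  apply Subtype.ext
  show Matrix.fromBlocks X 0 0 (-Xᵀ) * Matrix.fromBlocks Y 0 0 (-Yᵀ)
      - Matrix.fromBlocks Y 0 0 (-Yᵀ) * Matrix.fromBlocks X 0 0 (-Xᵀ)
    = Matrix.fromBlocks (X * Y - Y * X) 0 0 (-(X * Y - Y * X)ᵀ)
  ext (a|a) (b|b) <;>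
    simp [Matrix.fromBlocks_multiply, Matrix.sub_apply, Matrix.mul_apply, Matrix.transpose_apply,
      Finset.mul_sum, mul_comm, Finset.sum_sub_distrib]

lemma BC_bracket (B : Matrix (Fin n) (Fin n) ℂ) (hB : Bᵀ = B) (h1 h2) :
    ⁅(⟨Matrix.fromBlocks 0 B 0 0, h1⟩ : sp n), (⟨Matrix.fromBlocks 0 0 B 0, h2⟩ : sp n)⁆
      = Hgl (B * B) := by
  apply Subtype.ext
  show Matrix.fromBlocks 0 B 0 0 * Matrix.fromBlocks 0 0 B 0
      - Matrix.fromBlocks 0 0 B 0 * Matrix.fromBlocks 0 B 0 0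
    = Matrix.fromBlocks (B * B) 0 0 (-(B * B)ᵀ)
  rw [show (-(B*B)ᵀ : Matrix (Fin n) (Fin n) ℂ) = -(B*B) from by rw [Matrix.transpose_mul, hB]]
  ext (a|a) (b|b) <;> simp [Matrix.fromBlocks_multiply, Matrix.sub_apply]

lemma Xij_Yij_bracket (i j : Fin n) :
    ⁅Xij i j, Yij i j⁆ = Hgl ((Matrix.single i j 1 + Matrix.single j i 1)
      * (Matrix.single i j 1 + Matrix.single j i 1)) :=
  BC_bracket _ (symm_entry i j) _ _

lemma XL_YL_bracket (i : Fin n) :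
    ⁅XL i, YL i⁆ = Hgl (Matrix.single i i 1 * Matrix.single i i 1) :=
  BC_bracket _ (transpose_stdBasis i i 1) _ _

lemma trace_BB {i j : Fin n} (hij : i ≠ j) :
    ((Matrix.single i j (1:ℂ) + Matrix.single j i (1:ℂ))
      * (Matrix.single i j (1:ℂ) + Matrix.single j i (1:ℂ))).trace = (2:ℂ) := by
  rw [Matrix.add_mul, Matrix.mul_add, Matrix.mul_add]
  rw [Matrix.single_mul_single_of_ne (h := hij.symm), Matrix.single_mul_single_of_ne (h := hij),
    Matrix.single_mul_single_same, Matrix.single_mul_single_same]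
  simp [Matrix.trace_add, Matrix.trace_single_eq_same]
  norm_num

lemma sum_split {M : Type*} [AddCommMonoid M] (f : Fin n → Fin n → M) :
    ∑ i, ∑ j, f i j = (∑ p ∈ pairs n, (f p.1 p.2 + f p.2 p.1)) + ∑ i, f i i := by
  classical
  have tri : ∀ i j : Fin n, f i j = (if i < j then f i j else 0)
      + (if j < i then f i j else 0) + (if i = j then f i j else 0) := by
    intro i j
    rcases lt_trichotomy i j with h|h|h
    · simp [h, asymm h, ne_of_lt h]
    · simp [h, lt_irrefl]
    · simp [h, asymm h, (ne_of_gt h : i ≠ j)]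
  rw [show (∑ i, ∑ j, f i j) = ∑ i : Fin n, ∑ j : Fin n, ((if i < j then f i j else 0)
      + (if j < i then f i j else 0) + (if i = j then f i j else 0)) from
    Finset.sum_congr rfl fun i _ => Finset.sum_congr rfl fun j _ => tri i j]
  simp only [Finset.sum_add_distrib]
  have h3 : ∑ i : Fin n, ∑ j : Fin n, (if i = j then f i j else 0) = ∑ i, f i i := by
    apply Finset.sum_congr rfl
    intro i _
    simp [Finset.sum_ite_eq]
  have hpairs : ∀ (g : Fin n → Fin n → M),
      (∑ p ∈ pairs n, g p.1 p.2) = ∑ i : Fin n, ∑ j : Fin n, (if i < j then g i j else 0) := by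
    intro g
    rw [pairs, Finset.sum_filter]
    exact Fintype.sum_prod_type _
  have h2 : ∑ i : Fin n, ∑ j : Fin n, (if j < i then f i j else 0)
      = ∑ p ∈ pairs n, f p.2 p.1 := by
    rw [hpairs (fun a b => f b a), Finset.sum_comm]
  have hlt : (∑ i : Fin n, ∑ j : Fin n, if i < j then f i j else 0)
      = ∑ p ∈ pairs n, f p.1 p.2 := (hpairs f).symm
  rw [h3, h2, hlt, ← Finset.sum_add_distrib]

lemma two_mul_U (X : UniversalEnvelopingAlgebra ℂ (sp n)) : 2 * X = (2:ℂ) • X := by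
  rw [Algebra.smul_def, map_ofNat]

lemma Delta_eq_two_Cas (n : ℕ) : Delta n = 2 * Cas n := by
  -- Casimir in block form
  have hCas : Cas n = (4⁻¹:ℂ) • ((∑ i : Fin n, ∑ j : Fin n, ι (XA i j) * ι (XA j i))
      + (∑ i : Fin n, ∑ j : Fin n, ι (Xij i j) * ι (Yij i j))
      + (∑ i : Fin n, ∑ j : Fin n, ι (Yij i j) * ι (Xij i j))
      + (∑ i : Fin n, ∑ j : Fin n, ι (XA j i) * ι (XA i j))) := by
    rw [Cas, Fintype.sum_prod_type, Fintype.sum_sum_type]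
    rw [show (∑ i : Fin n, ∑ b : Fin n ⊕ Fin n, ι (Fe (Sum.inl i) b) * ι (Fe b (Sum.inl i)))
        = ∑ i : Fin n, ((∑ j : Fin n, ι (Fe (Sum.inl i) (Sum.inl j)) * ι (Fe (Sum.inl j) (Sum.inl i)))
          + ∑ j : Fin n, ι (Fe (Sum.inl i) (Sum.inr j)) * ι (Fe (Sum.inr j) (Sum.inl i))) from
      Finset.sum_congr rfl fun i _ => Fintype.sum_sum_type _]
    rw [show (∑ i : Fin n, ∑ b : Fin n ⊕ Fin n, ι (Fe (Sum.inr i) b) * ι (Fe b (Sum.inr i)))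
        = ∑ i : Fin n, ((∑ j : Fin n, ι (Fe (Sum.inr i) (Sum.inl j)) * ι (Fe (Sum.inl j) (Sum.inr i)))
          + ∑ j : Fin n, ι (Fe (Sum.inr i) (Sum.inr j)) * ι (Fe (Sum.inr j) (Sum.inr i))) from
      Finset.sum_congr rfl fun i _ => Fintype.sum_sum_type _]
    rw [Finset.sum_add_distrib, Finset.sum_add_distrib]
    have e1 : ∀ i j : Fin n, ι (Fe (Sum.inl i) (Sum.inl j)) * ι (Fe (Sum.inl j) (Sum.inl i))
        = (4⁻¹:ℂ) • (ι (XA i j) * ι (XA j i)) := by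
      intro i j
      rw [Fe_ll, Fe_ll, map_smul, map_smul, smul_mul_assoc, mul_smul_comm,
        smul_smul, XA_eq, XA_eq]
      norm_num
    have e2 : ∀ i j : Fin n, ι (Fe (Sum.inl i) (Sum.inr j)) * ι (Fe (Sum.inr j) (Sum.inl i))
        = (4⁻¹:ℂ) • (ι (Xij i j) * ι (Yij i j)) := by
      intro i j
      rw [Fe_lr, Fe_rl, Yij_symm, map_smul, map_smul, smul_mul_assoc,
        mul_smul_comm, smul_smul]
      norm_num
    have e3 : ∀ i j : Fin n, ι (Fe (Sum.inr i) (Sum.inl j)) * ι (Fe (Sum.inl j) (Sum.inr i))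
        = (4⁻¹:ℂ) • (ι (Yij i j) * ι (Xij i j)) := by
      intro i j
      rw [Fe_rl, Fe_lr, Xij_symm, map_smul, map_smul, smul_mul_assoc,
        mul_smul_comm, smul_smul]
      norm_num
    have e4 : ∀ i j : Fin n, ι (Fe (Sum.inr i) (Sum.inr j)) * ι (Fe (Sum.inr j) (Sum.inr i))
        = (4⁻¹:ℂ) • (ι (XA j i) * ι (XA i j)) := by
      intro i j
      rw [Fe_rr, Fe_rr, map_smul, map_smul, smul_mul_assoc, mul_smul_comm,
        smul_smul, XA_eq, XA_eq]
      norm_num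
    simp only [e1, e2, e3, e4]
    simp only [← Finset.smul_sum, ← smul_add]
    congr 1
    abel
  have hT4 : (∑ i : Fin n, ∑ j : Fin n, ι (XA j i) * ι (XA i j))
      = ∑ i : Fin n, ∑ j : Fin n, ι (XA i j) * ι (XA j i) := Finset.sum_comm
  have hT1 : (∑ i : Fin n, ∑ j : Fin n, ι (XA i j) * ι (XA j i))
      = (∑ p ∈ pairs n, (ι (XA p.1 p.2) * ι (YA p.1 p.2) + ι (YA p.1 p.2) * ι (XA p.1 p.2)))
        + ∑ i : Fin n, ι (dElt i) * ι (dElt i) := by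
    rw [sum_split (fun i j => ι (XA i j) * ι (XA j i))]
    rfl
  have hT2 : (∑ i : Fin n, ∑ j : Fin n, ι (Xij i j) * ι (Yij i j))
      = (∑ p ∈ pairs n, (ι (Xij p.1 p.2) * ι (Yij p.1 p.2) + ι (Xij p.1 p.2) * ι (Yij p.1 p.2)))
        + (4:ℂ) • ∑ i : Fin n, ι (XL i) * ι (YL i) := by
    rw [sum_split (fun i j => ι (Xij i j) * ι (Yij i j))]
    congr 1
    · apply Finset.sum_congr rfl
      intro p _
      rw [show Xij p.2 p.1 = Xij p.1 p.2 from Xij_symm p.1 p.2,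
        show Yij p.2 p.1 = Yij p.1 p.2 from Yij_symm p.1 p.2]
    · rw [Finset.smul_sum]
      apply Finset.sum_congr rfl
      intro i _
      rw [Xij_diag, Yij_diag, map_smul, map_smul, smul_mul_assoc, mul_smul_comm,
        smul_smul]
      norm_num
  have hT3 : (∑ i : Fin n, ∑ j : Fin n, ι (Yij i j) * ι (Xij i j))
      = (∑ p ∈ pairs n, (ι (Yij p.1 p.2) * ι (Xij p.1 p.2) + ι (Yij p.1 p.2) * ι (Xij p.1 p.2)))
        + (4:ℂ) • ∑ i : Fin n, ι (YL i) * ι (XL i) := by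
    rw [sum_split (fun i j => ι (Yij i j) * ι (Xij i j))]
    congr 1
    · apply Finset.sum_congr rfl
      intro p _
      rw [show Xij p.2 p.1 = Xij p.1 p.2 from Xij_symm p.1 p.2,
        show Yij p.2 p.1 = Yij p.1 p.2 from Yij_symm p.1 p.2]
    · rw [Finset.smul_sum]
      apply Finset.sum_congr rfl
      intro i _
      rw [Xij_diag, Yij_diag, map_smul, map_smul, smul_mul_assoc, mul_smul_comm,
        smul_smul]
      norm_num
  rw [two_mul_U, hCas, hT4, hT1, hT2, hT3]
  rw [Delta, Delta1]
  simp only [two_mul_U, Finset.sum_add_distrib, Finset.sum_sub_distrib, smul_add, smul_sub]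
  module

end Aux

set_option synthInstance.maxHeartbeats 1000000
set_option maxHeartbeats 1000000

/-- if `v` is holomorphic (annihilated by the lower-left symmetric
block) and of weight `k`, then the Laplace–Beltrami element `Δ` acts on `v`, and on
the whole `U(sp(2n,ℂ))`-submodule generated by `v`, by the scalar `kn(k−n−1)`. -/
theorem Delta_eigenvalue (n : ℕ) (hn : 0 < n)
    (V : Type*) [AddCommGroup V] [Module ℂ V]
    [Module (UniversalEnvelopingAlgebra ℂ (sp n)) V]
    [IsScalarTower ℂ (UniversalEnvelopingAlgebra ℂ (sp n)) V]
    (k : ℂ) (v : V)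
    (hhol : ∀ (C : Matrix (Fin n) (Fin n) ℂ) (hC : Cᵀ = C),
      ι (⟨Matrix.fromBlocks 0 0 C 0, memC C hC⟩ : sp n) • v = 0)
    (hwt : ∀ X : Matrix (Fin n) (Fin n) ℂ, ι (Hgl X) • v = (k * X.trace) • v) :
    Delta n • v = (k * n * (k - n - 1)) • v ∧
    ∀ u : UniversalEnvelopingAlgebra ℂ (sp n),
      Delta n • (u • v) = (k * n * (k - n - 1)) • (u • v) := by
  have hUV : ∀ (c : ℂ) (u : UniversalEnvelopingAlgebra ℂ (sp n)) (w : V),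
      u • (c • w) = c • (u • w) := by
    intro c u w
    rw [← algebraMap_smul (UniversalEnvelopingAlgebra ℂ (sp n)) c w, ← mul_smul,
      ← Algebra.commutes, mul_smul, algebraMap_smul]
  have h2smul : ∀ (S : UniversalEnvelopingAlgebra ℂ (sp n)) (w : V),
      (2 * S) • w = (2:ℂ) • (S • w) := by
    intro S w
    rw [two_mul_U, smul_assoc]
  have hYA : ∀ p ∈ pairs n, ι (YA p.1 p.2) • v = 0 := by
    intro p hp
    have hne : p.1 ≠ p.2 := ne_of_lt (Finset.mem_filter.1 hp).2
    rw [YA_eq, hwt, Matrix.trace_single_eq_of_ne _ _ _ hne.symm, mul_zero, zero_smul]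
  have hYij : ∀ (i j : Fin n), ι (Yij i j) • v = 0 := fun i j => hhol _ (symm_entry i j)
  have hYL : ∀ i : Fin n, ι (YL i) • v = 0 := fun i => hhol _ (transpose_stdBasis i i 1)
  have hprod0 : ∀ (x y : sp n), ι y • v = 0 → (ι x * ι y) • v = 0 := by
    intro x y h
    rw [mul_smul, h, smul_zero]
  have hbr : ∀ (x y : sp n),
      (ι x * ι y - ι y * ι x : UniversalEnvelopingAlgebra ℂ (sp n)) = ι ⁅x,y⁆ := by
    intro x y
    rw [LieHom.map_lie, Ring.lie_def]
  have hv1 : Delta n • v = (k * n * (k - n - 1)) • v := by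
    have hcard : ((pairs n).card : ℂ) * 2 = n*n - n := by
      have h := sum_split (n := n) (fun _ _ => (1:ℂ))
      simp only [Finset.sum_const, Finset.card_univ, Fintype.card_fin, nsmul_eq_mul,
        mul_one] at h
      norm_num at h
      push_cast at h ⊢
      linear_combination -h
    have hB0 : ((∑ p ∈ pairs n,
        (ι (XA p.1 p.2) * ι (YA p.1 p.2) + ι (Xij p.1 p.2) * ι (Yij p.1 p.2)))
        + 2 * ∑ i : Fin n, ι (XL i) * ι (YL i)) • v = 0 := by
      have e1 : ∀ p ∈ pairs n,
          ((ι (XA p.1 p.2) * ι (YA p.1 p.2) + ι (Xij p.1 p.2) * ι (Yij p.1 p.2)) :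
            UniversalEnvelopingAlgebra ℂ (sp n)) • v = (0 : V) := by
        intro p hp
        rw [add_smul, hprod0 _ _ (hYA p hp), hprod0 _ _ (hYij p.1 p.2), add_zero]
      have e2 : ∀ i ∈ (Finset.univ : Finset (Fin n)),
          ((ι (XL i) * ι (YL i)) : UniversalEnvelopingAlgebra ℂ (sp n)) • v = (0 : V) :=
        fun i _ => hprod0 _ _ (hYL i)
      rw [add_smul, h2smul, Finset.sum_smul, Finset.sum_smul,
        Finset.sum_congr rfl e1, Finset.sum_congr rfl e2]
      simp
    have hd : ∀ i ∈ (Finset.univ : Finset (Fin n)),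
        ((ι (dElt i) * ι (dElt i)) : UniversalEnvelopingAlgebra ℂ (sp n)) • v
          = (k * k) • v := by
      intro i _
      rw [mul_smul, dElt_eq, hwt, Matrix.trace_single_eq_same, mul_one, hUV, hwt,
        Matrix.trace_single_eq_same, mul_one, smul_smul]
    have hp : ∀ p ∈ pairs n,
        (((ι (XA p.1 p.2) * ι (YA p.1 p.2) - ι (YA p.1 p.2) * ι (XA p.1 p.2))
          + (ι (Xij p.1 p.2) * ι (Yij p.1 p.2) - ι (Yij p.1 p.2) * ι (Xij p.1 p.2))) :
            UniversalEnvelopingAlgebra ℂ (sp n)) • v = (k * 2) • v := by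
      intro p hp'
      have hne : p.1 ≠ p.2 := ne_of_lt (Finset.mem_filter.1 hp').2
      rw [add_smul, hbr, hbr, XA_eq, YA_eq, Hgl_bracket, Xij_Yij_bracket, hwt, hwt,
        trace_BB hne, Matrix.trace_sub, Matrix.single_mul_single_same,
        Matrix.single_mul_single_same, Matrix.trace_single_eq_same,
        Matrix.trace_single_eq_same, sub_self, mul_zero, zero_smul, zero_add]
    have hl : ∀ i ∈ (Finset.univ : Finset (Fin n)),
        ((ι (XL i) * ι (YL i) - ι (YL i) * ι (XL i)) :
          UniversalEnvelopingAlgebra ℂ (sp n)) • v = k • v := by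
      intro i _
      rw [hbr, XL_YL_bracket, hwt, Matrix.single_mul_single_same,
        Matrix.trace_single_eq_same]
      norm_num
    rw [Delta, add_smul, h2smul, hB0, smul_zero, add_zero, Delta1, sub_smul, add_smul, h2smul,
      Finset.sum_smul, Finset.sum_smul, Finset.sum_smul,
      Finset.sum_congr rfl hd, Finset.sum_congr rfl hp, Finset.sum_congr rfl hl]
    rw [Finset.sum_const, Finset.sum_const, Finset.sum_const, Finset.card_univ,
      Fintype.card_fin]
    rw [← Nat.cast_smul_eq_nsmul ℂ ((pairs n).card), ← Nat.cast_smul_eq_nsmul ℂ n,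
      ← Nat.cast_smul_eq_nsmul ℂ n, smul_smul, smul_smul, smul_smul, smul_smul,
      ← add_smul, ← sub_smul]
    congr 1
    push_cast
    linear_combination (-k) * hcard
  refine ⟨hv1, fun u => ?_⟩
  have hcomm : Delta n * u = u * Delta n := by
    rw [Delta_eq_two_Cas, two_mul_U, smul_mul_assoc, ← commute_all u, ← mul_smul_comm]
  rw [← mul_smul, hcomm, mul_smul, hv1, hUV]


end
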